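/- arXiv:1703.10382 — 5 statements merged into one kernel-verified Lean document; each statement's English description precedes it below -/
import Mathlib

section
/- No nonempty object of MRel is well-pointed: for every nonempty set A there exist morphisms f, g ∈ MRel(A,A) with f ≠ g such that for every morphism h ∈ MRel(∅, A) (i.e., h a set of pairs ([],α)) one has f ∘ h = g ∘ h. -/
/-- Composition in the category MRel. -/
def MComp {A B C : Type} (g : Set (Multiset B × C)) (f : Set (Multiset A × B)) :
    Set (Multiset A × C) :=
  {p | ∃ l : List (Multiset A × B), (∀ q ∈ l, q ∈ f) ∧
        p.1 = (l.map Prod.fst).sum ∧ (↑(l.map Prod.snd), p.2) ∈ g}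

/-! A point `h : ∅ → B` may be used any number of times in a composite, so `g ∘ h` only sees
the supports of the multisets occurring in `g`: the endomorphisms `{([α], α)}` and
`{([α, α], α)}` of `A` differ but agree on every point. -/

theorem mem_MComp_of_isEmpty {E B C : Type} [IsEmpty E] {g : Set (Multiset B × C)}
    {h : Set (Multiset E × B)} {p : Multiset E × C} :
    p ∈ MComp g h ↔ ∃ m : Multiset B, (m, p.2) ∈ g ∧ ∀ b ∈ m, ((0 : Multiset E), b) ∈ h := by
  constructor
  · rintro ⟨l, hl, -, hg⟩
    refine ⟨_, hg, fun b hb => ?_⟩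
    obtain ⟨q, hq, rfl⟩ := List.mem_map.mp (Multiset.mem_coe.mp hb)
    simpa only [← Subsingleton.elim q.1 0] using hl q hq
  · rintro ⟨m, hg, hm⟩
    refine ⟨m.toList.map ((0 : Multiset E), ·), ?_, Subsingleton.elim _ _, ?_⟩
    · simpa using hm
    · simpa only [List.map_map, Function.comp_def, List.map_id', Multiset.coe_toList] using hg

/-- No nonempty object of MRel is well-pointed: there are distinct endomorphisms `f ≠ g`
of `A` that agree after composition with every point `h : ∅ → A`
(the terminal object of MRel is the empty set). -/
theorem stmt_3 (A : Type) (hA : Nonempty A) :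
    ∃ f g : Set (Multiset A × A), f ≠ g ∧
      ∀ h : Set (Multiset Empty × A), MComp f h = MComp g h := by
  obtain ⟨α⟩ := hA
  refine ⟨{({α}, α)}, {({α, α}, α)}, ?_, fun h => ?_⟩
  · intro hfg
    have hcard := congrArg Multiset.card (Prod.ext_iff.mp (Set.singleton_eq_singleton_iff.mp hfg)).1
    simp at hcard
  · ext p
    simp [mem_MComp_of_isEmpty]
end

section
/- Soundness of relational graph models: if M =_β N then ⟦M⟧_x̄ = ⟦N⟧_x̄ in any relational graph model D, for any list of variables x̄ containing the free variables of M and N. -/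
/-- Untyped λ⊥-terms in de Bruijn notation, intrinsically scoped:
`Tm n` is the set of λ⊥-terms with free variables among `x₀,…,x_{n-1}`. -/
inductive Tm : ℕ → Type
  | var : ∀ {n : ℕ}, Fin n → Tm n
  | lam : ∀ {n : ℕ}, Tm (n + 1) → Tm n
  | app : ∀ {n : ℕ}, Tm n → Tm n → Tm n
  | bot : ∀ {n : ℕ}, Tm n

/-- Renaming of free variables. -/
def Tm.rename : ∀ {n m : ℕ}, (Fin n → Fin m) → Tm n → Tm m
  | _, _, f, .var k => .var (f k)
  | _, m, f, .lam t =>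
      .lam (t.rename fun k => Fin.cases (motive := fun _ => Fin (m + 1)) 0
        (fun j => (f j).succ) k)
  | _, _, f, .app t u => .app (t.rename f) (u.rename f)
  | _, _, _, .bot => .bot

/-- Simultaneous (capture-avoiding) substitution. -/
def Tm.subst : ∀ {n m : ℕ}, (Fin n → Tm m) → Tm n → Tm m
  | _, _, σ, .var k => σ k
  | _, m, σ, .lam t =>
      .lam (t.subst fun k => Fin.cases (motive := fun _ => Tm (m + 1)) (.var 0)
        (fun j => (σ j).rename Fin.succ) k)
  | _, _, σ, .app t u => .app (t.subst σ) (u.subst σ)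
  | _, _, _, .bot => .bot

/-- Substitution `M{N/y}` of `N` for the 0-th free variable of `M`. -/
def Tm.subst1 {n : ℕ} (M : Tm (n + 1)) (N : Tm n) : Tm n :=
  M.subst (Fin.cases (motive := fun _ => Tm n) N Tm.var)

/-- One-step β-reduction (contextual closure of `(λx.M)N → M{N/x}`). -/
inductive Beta : ∀ {n : ℕ}, Tm n → Tm n → Prop
  | redex {n} (M : Tm (n + 1)) (N : Tm n) : Beta (.app (.lam M) N) (M.subst1 N)
  | appL {n} {M M' N : Tm n} : Beta M M' → Beta (.app M N) (.app M' N)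
  | appR {n} {M N N' : Tm n} : Beta N N' → Beta (.app M N) (.app M N')
  | lam {n} {M M' : Tm (n + 1)} : Beta M M' → Beta (.lam M) (.lam M')

/-- A λ⊥-term is a λ-term when it contains no occurrence of `⊥`. -/
def BotFree : ∀ {n : ℕ}, Tm n → Prop
  | _, .var _ => True
  | _, .lam M => BotFree M
  | _, .app M N => BotFree M ∧ BotFree N
  | _, .bot => False

/-- The environment assigning the multiset `[α]` to the variable `k` and `0` elsewhere. -/
def single {D : Type} {n : ℕ} (k : Fin n) (α : D) : Fin n → Multiset D :=
  fun j => if j = k then {α} else 0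

/-- The relational interpretation `⟦M⟧_{x̄} ⊆ M_f(D)ⁿ × D` of a λ⊥-term in a relational
graph model `(D, i)`. -/
def Interp {D : Type} (i : Multiset D × D → D) :
    ∀ {n : ℕ}, Tm n → Set ((Fin n → Multiset D) × D)
  | _, .var k => {p | ∃ α, p = (single k α, α)}
  | _, .lam M => {p | ∃ Γ a α, (Fin.cons a Γ, α) ∈ Interp i M ∧ p = (Γ, i (a, α))}
  | n, .app M N =>
      {p | ∃ (Γ₀ : Fin n → Multiset D) (l : List ((Fin n → Multiset D) × D)),
        (Γ₀, i (↑(l.map Prod.snd), p.2)) ∈ Interp i M ∧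
        (∀ q ∈ l, q ∈ Interp i N) ∧ p.1 = Γ₀ + (l.map Prod.fst).sum}
  | _, .bot => ∅

/-- The non-idempotent intersection type system associated with a relational graph model
`(D, i)`: `Der i Γ M α m` states that the judgment `Γ ⊢ M : α` is derivable by a
derivation `π` with `#app(π) = m` occurrences of the application rule. -/
inductive Der {D : Type} (i : Multiset D × D → D) :
    ∀ {n : ℕ}, (Fin n → Multiset D) → Tm n → D → ℕ → Prop
  | var {n} (k : Fin n) (α : D) : Der i (single k α) (.var k) α 0
  | lam {n} {Γ : Fin n → Multiset D} {a : Multiset D} {M : Tm (n + 1)} {α : D} {m : ℕ} :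
      Der i (Fin.cons a Γ) M α m → Der i Γ (.lam M) (i (a, α)) m
  | app {n} {Γ : Fin n → Multiset D} {M N : Tm n} {α : D} {m : ℕ}
      (l : List ((Fin n → Multiset D) × D × ℕ)) :
      Der i Γ M (i (↑(l.map fun q => q.2.1), α)) m →
      (∀ q ∈ l, Der i q.1 N q.2.1 q.2.2) →
      Der i (Γ + (l.map fun q => q.1).sum) (.app M N) α
        (m + (l.map fun q => q.2.2).sum + 1)

/-!
Each clause of `Interp` is assembled from two operations on sets of pairs (context, point):
the promotion `bang S`, which sums finitely many elements of `S` into one context paired with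
the multiset of their points, and the transport `mapFst R S` of contexts along a relation `R`.
Promotion commutes with transport along any additive relation (one compatible with `0` and with
splitting sums), and renaming and substitution act on interpretations as such transports:
`⟦t.subst σ⟧` is `⟦t⟧` transported along "`Δ = ∑ₖ Δₖ` with `(Δₖ, Γ k) ∈ bang ⟦σ k⟧`".
For the redex `(λx.M) N` substitution thus asks for a point of `⟦M⟧` at a context `a :: Γ₀` and
a promotion of `⟦N⟧` with multiset `a`, and so does the application clause once injectivity of `i`
recovers `(a, α)` from `i (a, α)`. Compositionality of `Interp` gives the contextual closure.
-/

namespace RelGraph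

section Bang

variable {C D : Type*} [AddCommMonoid C]

/-- The promotion `!S` of linear logic: the pairs `(Γ₁ + ⋯ + Γₖ, [α₁, …, αₖ])` with every
`(Γⱼ, αⱼ) ∈ S`. It is what the application clause of `Interp` asks of the argument. -/
def bang (S : Set (C × D)) : Set (C × Multiset D) :=
  {p | ∃ s : Multiset (C × D), (∀ q ∈ s, q ∈ S) ∧ s.map Prod.snd = p.2 ∧
    (s.map Prod.fst).sum = p.1}

variable {S : Set (C × D)}

theorem mem_bang_zero {Γ : C} : (Γ, 0) ∈ bang S ↔ Γ = 0 := by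
  constructor
  · rintro ⟨s, -, hs, rfl⟩
    simp [Multiset.map_eq_zero.mp hs]
  · rintro rfl
    exact ⟨0, by simp, rfl, rfl⟩

theorem mem_bang_cons {Γ : C} {α : D} {a : Multiset D} :
    (Γ, α ::ₘ a) ∈ bang S ↔ ∃ Γ₁ Γ₂, (Γ₁, α) ∈ S ∧ (Γ₂, a) ∈ bang S ∧ Γ = Γ₁ + Γ₂ := by
  classical
  constructor
  · rintro ⟨s, hS, hs, rfl⟩
    obtain ⟨q, hq, rfl, hs'⟩ := (Multiset.map_eq_cons _ _ _ _).mpr hs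
    refine ⟨q.1, ((s.erase q).map Prod.fst).sum, hS q hq,
      ⟨s.erase q, fun r hr => hS r (Multiset.mem_of_mem_erase hr), hs', rfl⟩, ?_⟩
    rw [← Multiset.sum_cons, ← Multiset.map_cons, Multiset.cons_erase hq]
  · rintro ⟨Γ₁, Γ₂, h₁, ⟨s, hS, hs, rfl⟩, rfl⟩
    refine ⟨(Γ₁, α) ::ₘ s, ?_, by simpa using hs, by simp⟩
    intro q hq
    rcases Multiset.mem_cons.mp hq with rfl | hq
    exacts [h₁, hS q hq]

theorem mem_bang_singleton {Γ : C} {α : D} : (Γ, {α}) ∈ bang S ↔ (Γ, α) ∈ S := by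
  rw [← Multiset.cons_zero, mem_bang_cons]
  simp only [mem_bang_zero]
  constructor
  · rintro ⟨Γ₁, _, h, rfl, rfl⟩
    simpa using h
  · exact fun h => ⟨Γ, 0, h, rfl, (add_zero Γ).symm⟩

theorem mem_bang_add {Γ : C} {a b : Multiset D} :
    (Γ, a + b) ∈ bang S ↔ ∃ Γ₁ Γ₂, (Γ₁, a) ∈ bang S ∧ (Γ₂, b) ∈ bang S ∧ Γ = Γ₁ + Γ₂ := by
  induction a using Multiset.induction generalizing Γ with
  | empty =>
    simp only [zero_add, mem_bang_zero]
    exact ⟨fun h => ⟨0, Γ, rfl, h, (zero_add Γ).symm⟩, by rintro ⟨_, _, rfl, h, rfl⟩; simpa⟩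
  | cons α a ih =>
    simp only [Multiset.cons_add, mem_bang_cons, ih]
    constructor
    · rintro ⟨Γ₁, _, h₁, ⟨Γ₂, Γ₃, h₂, h₃, rfl⟩, rfl⟩
      exact ⟨Γ₁ + Γ₂, Γ₃, ⟨Γ₁, Γ₂, h₁, h₂, rfl⟩, h₃, (add_assoc _ _ _).symm⟩
    · rintro ⟨_, Γ₃, ⟨Γ₁, Γ₂, h₁, h₂, rfl⟩, h₃, rfl⟩
      exact ⟨Γ₁, Γ₂ + Γ₃, h₁, ⟨Γ₂, Γ₃, h₂, h₃, rfl⟩, add_assoc _ _ _⟩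

end Bang

section AdditiveRel

variable {C C' D : Type*} [AddCommMonoid C] [AddCommMonoid C']

structure IsAdditiveRel (R : C → C' → Prop) : Prop where
  zero_iff : ∀ Δ, R 0 Δ ↔ Δ = 0
  add_iff : ∀ Γ₁ Γ₂ Δ, R (Γ₁ + Γ₂) Δ ↔ ∃ Δ₁ Δ₂, R Γ₁ Δ₁ ∧ R Γ₂ Δ₂ ∧ Δ = Δ₁ + Δ₂

theorem isAdditiveRel_graph (g : C →+ C') :
    IsAdditiveRel fun Γ Δ => Δ = g Γ where
  zero_iff Δ := by rw [map_zero]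
  add_iff Γ₁ Γ₂ Δ := by simp

def mapFst (R : C → C' → Prop) (S : Set (C × D)) : Set (C' × D) :=
  {p | ∃ Γ, (Γ, p.2) ∈ S ∧ R Γ p.1}

theorem bang_mapFst {R : C → C' → Prop} (hR : IsAdditiveRel R)
    (S : Set (C × D)) : bang (mapFst R S) = mapFst R (bang S) := by
  ext ⟨Δ, a⟩
  induction a using Multiset.induction generalizing Δ with
  | empty => simp [mapFst, mem_bang_zero, hR.zero_iff]
  | cons α a ih =>
    simp only [mapFst, Set.mem_ofPred_eq] at ih ⊢
    simp only [mem_bang_cons, ih]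
    constructor
    · rintro ⟨Δ₁, Δ₂, ⟨Γ₁, h₁, hR₁⟩, ⟨Γ₂, h₂, hR₂⟩, rfl⟩
      exact ⟨Γ₁ + Γ₂, ⟨Γ₁, Γ₂, h₁, h₂, rfl⟩, (hR.add_iff _ _ _).mpr ⟨Δ₁, Δ₂, hR₁, hR₂, rfl⟩⟩
    · rintro ⟨_, ⟨Γ₁, Γ₂, h₁, h₂, rfl⟩, hR₁₂⟩
      obtain ⟨Δ₁, Δ₂, hR₁, hR₂, rfl⟩ := (hR.add_iff _ _ _).mp hR₁₂
      exact ⟨Δ₁, Δ₂, ⟨Γ₁, h₁, hR₁⟩, ⟨Γ₂, h₂, hR₂⟩, rfl⟩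

end AdditiveRel

section BangPi

variable {ι C D : Type*} [Fintype ι] [AddCommMonoid C]

def bangPi (S : ι → Set (C × D)) (Γ : ι → Multiset D) (Δ : C) : Prop :=
  ∃ Δs : ι → C, (∀ k, (Δs k, Γ k) ∈ bang (S k)) ∧ Δ = ∑ k, Δs k

theorem isAdditiveRel_bangPi (S : ι → Set (C × D)) : IsAdditiveRel (bangPi S) where
  zero_iff Δ := by
    simp only [bangPi, Pi.zero_apply, mem_bang_zero]
    exact ⟨fun ⟨Δs, h, hΔ⟩ => by simp [hΔ, funext h], fun h => ⟨0, fun _ => rfl, by simp [h]⟩⟩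
  add_iff Γ₁ Γ₂ Δ := by
    simp only [bangPi, Pi.add_apply, mem_bang_add]
    constructor
    · rintro ⟨Δs, h, rfl⟩
      choose Δs₁ Δs₂ h₁ h₂ hs using h
      exact ⟨_, _, ⟨Δs₁, h₁, rfl⟩, ⟨Δs₂, h₂, rfl⟩, by simp [hs, Finset.sum_add_distrib]⟩
    · rintro ⟨_, _, ⟨Δs₁, h₁, rfl⟩, ⟨Δs₂, h₂, rfl⟩, rfl⟩
      exact ⟨Δs₁ + Δs₂, fun k => ⟨_, _, h₁ k, h₂ k, rfl⟩, by simp [Finset.sum_add_distrib]⟩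

theorem bangPi_single [DecidableEq ι] {S : ι → Set (C × D)} {k : ι} {a : Multiset D} {Δ : C} :
    bangPi S (Pi.single k a) Δ ↔ (Δ, a) ∈ bang (S k) := by
  constructor
  · rintro ⟨Δs, h, rfl⟩
    have hzero : ∀ j ≠ k, Δs j = 0 := fun j hj => mem_bang_zero.mp (by simpa [hj] using h j)
    simpa [Finset.sum_eq_single k fun j _ hj => hzero j hj] using h k
  · intro h
    refine ⟨Pi.single k Δ, fun j => ?_, by simp⟩
    obtain rfl | hj := eq_or_ne j k
    · simpa using h
    · simpa [hj] using mem_bang_zero.mpr rfl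

theorem bangPi_fin_succ {n : ℕ} {S : Fin (n + 1) → Set (C × D)} {Γ : Fin (n + 1) → Multiset D}
    {Δ : C} :
    bangPi S Γ Δ ↔ ∃ Δ₀ Δ₁, (Δ₀, Γ 0) ∈ bang (S 0) ∧
      bangPi (fun k => S k.succ) (Fin.tail Γ) Δ₁ ∧ Δ = Δ₀ + Δ₁ := by
  constructor
  · rintro ⟨Δs, h, rfl⟩
    exact ⟨Δs 0, _, h 0, ⟨Fin.tail Δs, fun k => h k.succ, rfl⟩, Fin.sum_univ_succ Δs⟩
  · rintro ⟨Δ₀, _, h₀, ⟨Δs, h, rfl⟩, rfl⟩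
    refine ⟨Fin.cons Δ₀ Δs, Fin.cases h₀ h, ?_⟩
    simp [Fin.sum_univ_succ]

theorem bangPi_mapFst_graph {C' : Type*} [AddCommMonoid C'] (g : C →+ C')
    {S : ι → Set (C × D)} {Γ : ι → Multiset D} {Δ : C'} :
    bangPi (fun k => mapFst (fun Γ Δ => Δ = g Γ) (S k)) Γ Δ ↔ ∃ Δ', bangPi S Γ Δ' ∧ Δ = g Δ' := by
  simp only [bangPi, bang_mapFst (isAdditiveRel_graph g)]
  simp only [mapFst, Set.mem_ofPred_eq]
  constructor
  · rintro ⟨Δs, h, rfl⟩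
    choose Δs' h' hs using h
    exact ⟨_, ⟨Δs', h', rfl⟩, by simp [hs, map_sum]⟩
  · rintro ⟨_, ⟨Δs', h', rfl⟩, rfl⟩
    exact ⟨fun k => g (Δs' k), fun k => ⟨Δs' k, h' k, rfl⟩, by simp [map_sum]⟩

end BangPi

section Push

variable {ι κ M : Type*} [Fintype ι] [DecidableEq κ] [AddCommMonoid M]

def push (f : ι → κ) : (ι → M) →+ (κ → M) where
  toFun Γ := ∑ k, Pi.single (f k) (Γ k)
  map_zero' := by simp
  map_add' Γ Γ' := by simp [Pi.single_add, Finset.sum_add_distrib]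

theorem push_apply (f : ι → κ) (Γ : ι → M) : push f Γ = ∑ k, Pi.single (f k) (Γ k) := rfl

theorem push_single [DecidableEq ι] (f : ι → κ) (k : ι) (a : M) :
    push f (Pi.single k a) = Pi.single (f k) a := by
  rw [push_apply, Finset.sum_eq_single k (fun j _ hj => by simp [hj]) (by simp)]
  simp

theorem pi_single_zero_add_cons {n : ℕ} (a : M) (Γ : Fin n → M) :
    (Pi.single 0 a : Fin (n + 1) → M) + Fin.cons 0 Γ = Fin.cons a Γ := by
  ext j
  cases j using Fin.cases <;> simp

theorem push_succ {n : ℕ} (Γ : Fin n → M) : push Fin.succ Γ = Fin.cons 0 Γ := by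
  ext j
  cases j using Fin.cases <;> simp [push_apply, Pi.single_apply]

theorem push_cases_cons {n m : ℕ} (f : Fin n → Fin m) (a : M) (Γ : Fin n → M) :
    push (fun k => Fin.cases (motive := fun _ => Fin (m + 1)) 0 (fun j => (f j).succ) k)
      (Fin.cons a Γ) = Fin.cons a (push f Γ) := by
  ext j
  cases j using Fin.cases <;>
    simp [push_apply, Fin.sum_univ_succ, Pi.single_apply, Finset.sum_apply,
      (Fin.succ_ne_zero _).symm]

end Push

section Interp

variable {D : Type} (i : Multiset D × D → D)

theorem single_eq_pi_single {n : ℕ} (k : Fin n) (α : D) : single k α = Pi.single k {α} := by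
  ext1 j
  simp [single, Pi.single_apply]

theorem mem_interp_var {n : ℕ} {k : Fin n} {Γ : Fin n → Multiset D} {α : D} :
    (Γ, α) ∈ Interp i (.var k) ↔ Γ = Pi.single k {α} := by
  simp [Interp, single_eq_pi_single]

theorem mem_interp_lam {n : ℕ} {M : Tm (n + 1)} {Γ : Fin n → Multiset D} {β : D} :
    (Γ, β) ∈ Interp i (.lam M) ↔ ∃ a α, (Fin.cons a Γ, α) ∈ Interp i M ∧ β = i (a, α) := by
  simp [Interp]

theorem mem_interp_app {n : ℕ} {M N : Tm n} {Γ : Fin n → Multiset D} {α : D} :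
    (Γ, α) ∈ Interp i (.app M N) ↔ ∃ Γ₀ Γ₁ a, (Γ₀, i (a, α)) ∈ Interp i M ∧
      (Γ₁, a) ∈ bang (Interp i N) ∧ Γ = Γ₀ + Γ₁ := by
  simp only [Interp, bang, Set.mem_ofPred_eq]
  constructor
  · rintro ⟨Γ₀, l, hM, hN, rfl⟩
    exact ⟨Γ₀, _, _, hM, ⟨l, hN, rfl, rfl⟩, rfl⟩
  · rintro ⟨Γ₀, _, _, hM, ⟨s, hN, rfl, rfl⟩, rfl⟩
    refine ⟨Γ₀, s.toList, ?_, fun q hq => hN q (Multiset.mem_toList.mp hq), ?_⟩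
    · simpa [← Multiset.map_coe] using hM
    · simp [← Multiset.sum_coe, ← Multiset.map_coe]

theorem mem_bang_interp_var {n : ℕ} {k : Fin n} {Γ : Fin n → Multiset D} {a : Multiset D} :
    (Γ, a) ∈ bang (Interp i (.var k)) ↔ Γ = Pi.single k a := by
  induction a using Multiset.induction generalizing Γ with
  | empty => simp [mem_bang_zero]
  | cons α a ih =>
    simp only [mem_bang_cons, ih, mem_interp_var, exists_and_left, exists_eq_left]
    rw [← Multiset.singleton_add, Pi.single_add]

theorem bangPi_interp_var {n : ℕ} {Γ Δ : Fin n → Multiset D} :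
    bangPi (fun k => Interp i (.var k)) Γ Δ ↔ Δ = Γ := by
  simp only [bangPi, mem_bang_interp_var]
  constructor
  · rintro ⟨Δs, h, rfl⟩
    simp [funext h, Finset.univ_sum_single]
  · intro h
    exact ⟨fun k => Pi.single k (Γ k), fun _ => rfl, by simp [h, Finset.univ_sum_single]⟩

theorem interp_app_eq_mapFst {n m : ℕ} {R : (Fin n → Multiset D) → (Fin m → Multiset D) → Prop}
    (hR : IsAdditiveRel R) {M N : Tm n} {M' N' : Tm m}
    (hM : Interp i M' = mapFst R (Interp i M)) (hN : Interp i N' = mapFst R (Interp i N)) :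
    Interp i (.app M' N') = mapFst R (Interp i (.app M N)) := by
  ext ⟨Δ, α⟩
  simp only [mem_interp_app, hM, hN, bang_mapFst hR]
  simp only [mapFst, Set.mem_ofPred_eq, mem_interp_app]
  constructor
  · rintro ⟨Δ₀, Δ₁, a, ⟨Γ₀, hΓ₀, hR₀⟩, ⟨Γ₁, hΓ₁, hR₁⟩, rfl⟩
    exact ⟨Γ₀ + Γ₁, ⟨Γ₀, Γ₁, a, hΓ₀, hΓ₁, rfl⟩, (hR.add_iff _ _ _).mpr ⟨Δ₀, Δ₁, hR₀, hR₁, rfl⟩⟩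
  · rintro ⟨_, ⟨Γ₀, Γ₁, a, hΓ₀, hΓ₁, rfl⟩, hR₀₁⟩
    obtain ⟨Δ₀, Δ₁, hR₀, hR₁, rfl⟩ := (hR.add_iff _ _ _).mp hR₀₁
    exact ⟨Δ₀, Δ₁, a, ⟨Γ₀, hΓ₀, hR₀⟩, ⟨Γ₁, hΓ₁, hR₁⟩, rfl⟩

theorem interp_rename {n : ℕ} (t : Tm n) {m : ℕ} (f : Fin n → Fin m) :
    Interp i (t.rename f) = mapFst (fun Γ Δ => Δ = push f Γ) (Interp i t) := by
  induction t generalizing m with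
  | var k => ext ⟨Δ, α⟩; simp [Tm.rename, mapFst, mem_interp_var, push_single]
  | lam t ih =>
    ext ⟨Δ, β⟩
    simp only [Tm.rename, mapFst, Set.mem_ofPred_eq, mem_interp_lam, ih]
    constructor
    · rintro ⟨a, α, ⟨Γ', hΓ', hpush⟩, rfl⟩
      rw [← Fin.cons_self_tail Γ', push_cases_cons, Fin.cons_inj] at hpush
      obtain ⟨rfl, rfl⟩ := hpush
      exact ⟨Fin.tail Γ', ⟨Γ' 0, α, by rwa [Fin.cons_self_tail], rfl⟩, rfl⟩
    · rintro ⟨Γ, ⟨a, α, hΓ, rfl⟩, rfl⟩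
      exact ⟨a, α, ⟨Fin.cons a Γ, hΓ, (push_cases_cons f a Γ).symm⟩, rfl⟩
  | app t u iht ihu => exact interp_app_eq_mapFst i (isAdditiveRel_graph (push f)) (iht f) (ihu f)
  | bot => ext; simp [Tm.rename, mapFst, Interp]

theorem bangPi_interp_lift {n m : ℕ} (σ : Fin n → Tm m) {Γ : Fin (n + 1) → Multiset D}
    {Δ : Fin (m + 1) → Multiset D} :
    bangPi (fun k => Interp i
        (Fin.cases (motive := fun _ => Tm (m + 1)) (.var 0) (fun j => (σ j).rename Fin.succ) k))
      Γ Δ ↔ ∃ Δ', bangPi (fun k => Interp i (σ k)) (Fin.tail Γ) Δ' ∧ Δ = Fin.cons (Γ 0) Δ' := by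
  simp only [bangPi_fin_succ, Fin.cases_zero, Fin.cases_succ, mem_bang_interp_var,
    interp_rename, bangPi_mapFst_graph]
  simp only [push_succ]
  constructor
  · rintro ⟨_, _, rfl, ⟨Δ', h, rfl⟩, rfl⟩
    exact ⟨Δ', h, pi_single_zero_add_cons _ _⟩
  · rintro ⟨Δ', h, rfl⟩
    exact ⟨_, _, rfl, ⟨Δ', h, rfl⟩, (pi_single_zero_add_cons _ _).symm⟩

theorem interp_subst {n : ℕ} (t : Tm n) {m : ℕ} (σ : Fin n → Tm m) :
    Interp i (t.subst σ) = mapFst (bangPi fun k => Interp i (σ k)) (Interp i t) := by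
  induction t generalizing m with
  | var k =>
    ext ⟨Δ, α⟩
    simp [Tm.subst, mapFst, mem_interp_var, bangPi_single, mem_bang_singleton]
  | lam t ih =>
    ext ⟨Δ, β⟩
    simp only [Tm.subst, mapFst, Set.mem_ofPred_eq, mem_interp_lam, ih, bangPi_interp_lift]
    constructor
    · rintro ⟨a, α, ⟨Γ', hΓ', Δ', hσ, hcons⟩, rfl⟩
      obtain ⟨rfl, rfl⟩ := Fin.cons_inj.mp hcons
      exact ⟨Fin.tail Γ', ⟨Γ' 0, α, by rwa [Fin.cons_self_tail], rfl⟩, hσ⟩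
    · rintro ⟨Γ, ⟨a, α, hΓ, rfl⟩, hσ⟩
      exact ⟨a, α, ⟨Fin.cons a Γ, hΓ, Δ, hσ, rfl⟩, rfl⟩
  | app t u iht ihu => exact interp_app_eq_mapFst i (isAdditiveRel_bangPi _) (iht σ) (ihu σ)
  | bot => ext; simp [Tm.subst, mapFst, Interp]

theorem interp_redex (hi : Function.Injective i) {n : ℕ} (M : Tm (n + 1)) (N : Tm n) :
    Interp i (.app (.lam M) N) = Interp i (M.subst1 N) := by
  ext ⟨Γ, α⟩
  simp only [Tm.subst1, interp_subst, mapFst, Set.mem_ofPred_eq, bangPi_fin_succ, Fin.cases_zero,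
    Fin.cases_succ, bangPi_interp_var, mem_interp_app, mem_interp_lam, hi.eq_iff, Prod.mk.injEq]
  constructor
  · rintro ⟨Γ₀, Γ₁, a, ⟨_, _, hM, rfl, rfl⟩, hN, rfl⟩
    exact ⟨Fin.cons a Γ₀, hM, Γ₁, Γ₀, by simpa using hN, rfl, add_comm _ _⟩
  · rintro ⟨Γ', hM, Δ₀, _, hN, rfl, rfl⟩
    exact ⟨Fin.tail Γ', Δ₀, Γ' 0, ⟨Γ' 0, α, by rwa [Fin.cons_self_tail], rfl, rfl⟩, hN,
      add_comm _ _⟩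

theorem interp_eq_of_beta (hi : Function.Injective i) {n : ℕ} {M N : Tm n} (h : Beta M N) :
    Interp i M = Interp i N := by
  induction h with
  | redex M N => exact interp_redex i hi M N
  | appL _ ih | appR _ ih | lam _ ih => simp only [Interp, ih]

end Interp

end RelGraph

theorem stmt_7_general {D : Type} (i : Multiset D × D → D)
    (hi : Function.Injective i) {n : ℕ} (M N : Tm n)
    (h : Relation.EqvGen (fun a b : Tm n => Beta a b) M N) :
    Interp i M = Interp i N := by
  induction h with
  | rel _ _ hβ => exact RelGraph.interp_eq_of_beta i hi hβ
  | refl => rfl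
  | symm _ _ _ ih => exact ih.symm
  | trans _ _ _ _ _ ih₁ ih₂ => exact ih₁.trans ih₂

/-- Soundness of relational graph models: β-convertible λ-terms have the same
relational interpretation. -/
theorem stmt_7 {D : Type} [Infinite D] (i : Multiset D × D → D)
    (hi : Function.Injective i) {n : ℕ} (M N : Tm n)
    (hM : BotFree M) (hN : BotFree N)
    (h : Relation.EqvGen (fun a b : Tm n => Beta a b) M N) :
    Interp i M = Interp i N :=
  stmt_7_general i hi M N h
end

section
/- Weighted substitution lemma: let π₀ be a derivation of Γ₀, x : [β₁,…,β_n] ⊢_D M : α and πᵢ derivations of Γᵢ ⊢_D N : βᵢ for 1 ≤ i ≤ n. Then there exists a derivation π of Σ_{i=0}^n Γᵢ ⊢_D M{N/x} : α with #app(π) = Σ_{i=0}^n #app(πᵢ), where #app counts occurrences of the application rule in a derivation. -/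
/-!
Generalise to simultaneous substitution `σ`, where the `k`-th variable is typed by a multiset
`Δ k` realised by a multiset of derivations of `σ k`, and induct on the derivation of `M`.
A variable leaf is replaced by the single derivation it receives; under a binder the
derivations are weakened (renaming changes no rule) and the new variable is typed by itself,
at weight `0`; at an application the derivations plugged into the environment of the
conclusion are split between the two premises, which is possible because environments are
added as multisets. No application rule is created or lost, so the weights add up.
-/

open Finset

theorem Multiset.exists_eq_add_of_map_eq_add {α β : Type*} {f : α → β} {s t : Multiset β} :
    ∀ {L : Multiset α}, L.map f = s + t → ∃ L₁ L₂, L = L₁ + L₂ ∧ L₁.map f = s ∧ L₂.map f = t := by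
  induction s using Multiset.induction with
  | empty => exact fun {L} h => ⟨0, L, by simp, by simp, by simpa using h⟩
  | cons b s ih =>
    intro L h
    have hb : b ∈ L.map f := h ▸ Multiset.mem_add.mpr (.inl (Multiset.mem_cons_self b s))
    obtain ⟨x, hx, rfl⟩ := Multiset.mem_map.mp hb
    obtain ⟨L', rfl⟩ := Multiset.exists_cons_of_mem hx
    rw [Multiset.map_cons, Multiset.cons_add, Multiset.cons_inj_right] at h
    obtain ⟨L₁, L₂, rfl, rfl, rfl⟩ := ih h
    exact ⟨x ::ₘ L₁, L₂, by simp, by simp, rfl⟩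

section

variable {D : Type}

lemma single_eq_piSingle {n : ℕ} (k : Fin n) (α : D) : single k α = Pi.single k {α} := by
  funext j
  simp [single, Pi.single_apply]

def pushEnv {n m : ℕ} (f : Fin n → Fin m) : (Fin n → Multiset D) →+ (Fin m → Multiset D) where
  toFun Γ := ∑ k, Pi.single (f k) (Γ k)
  map_zero' := by simp
  map_add' Γ Δ := by simp [Pi.single_add, sum_add_distrib]

lemma pushEnv_apply {n m : ℕ} (f : Fin n → Fin m) (Γ : Fin n → Multiset D) :
    pushEnv f Γ = ∑ k, Pi.single (f k) (Γ k) := rfl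

lemma pushEnv_piSingle {n m : ℕ} (f : Fin n → Fin m) (k : Fin n) (a : Multiset D) :
    pushEnv f (Pi.single k a) = Pi.single (f k) a := by
  rw [pushEnv_apply, sum_eq_single k (fun j _ hj => by simp [hj]) (by simp)]
  simp

lemma pushEnv_succ {n : ℕ} (Γ : Fin n → Multiset D) : pushEnv Fin.succ Γ = Fin.cons 0 Γ := by
  funext j
  cases j using Fin.cases <;>
    simp [pushEnv_apply, Pi.single_apply, Finset.sum_apply, Fin.succ_ne_zero]

lemma pushEnv_cons {n m : ℕ} (f : Fin n → Fin m) (a : Multiset D) (Γ : Fin n → Multiset D) :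
    pushEnv (fun k => Fin.cases (motive := fun _ => Fin (m + 1)) 0 (fun j => (f j).succ) k)
      (Fin.cons a Γ) = Fin.cons a (pushEnv f Γ) := by
  rw [pushEnv_apply, Fin.sum_univ_succ]
  funext j
  cases j using Fin.cases <;>
    simp [pushEnv_apply, Pi.single_apply, Finset.sum_apply, Fin.succ_ne_zero]

theorem Der.rename {i : Multiset D × D → D} {n : ℕ} {Γ : Fin n → Multiset D} {M : Tm n} {α : D}
    {m : ℕ} (h : Der i Γ M α m) {n' : ℕ} (f : Fin n → Fin n') :
    Der i (pushEnv f Γ) (M.rename f) α m := by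
  induction h generalizing n' with
  | var k α =>
    simpa [Tm.rename, single_eq_piSingle, pushEnv_piSingle] using Der.var (i := i) (f k) α
  | lam _ ih => exact .lam (pushEnv_cons f _ _ ▸ ih _)
  | app l _ _ ihM ihN =>
    have := Der.app (l.map fun q => (pushEnv f q.1, q.2))
      (by simpa [Function.comp_def] using ihM f)
      (List.forall_mem_map.mpr fun q hq => ihN q hq f)
    simpa [Tm.rename, map_list_sum, Function.comp_def] using this

/-- The paper's judgment `Γ ⊢ N : a` for a multiset `a`, as it appears in the premises of the
application rule: a multiset of derivations whose types make up `a`, whose environments add up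
to `Γ` and whose weights add up to `m`. -/
def DerMulti (i : Multiset D × D → D) {n : ℕ} (Γ : Fin n → Multiset D) (N : Tm n)
    (a : Multiset D) (m : ℕ) : Prop :=
  ∃ L : Multiset ((Fin n → Multiset D) × D × ℕ), L.map (·.2.1) = a ∧
    (∀ q ∈ L, Der i q.1 N q.2.1 q.2.2) ∧ (L.map (·.1)).sum = Γ ∧ (L.map (·.2.2)).sum = m

namespace DerMulti

variable {i : Multiset D × D → D} {n : ℕ} {Γ Γ' : Fin n → Multiset D} {N : Tm n}
  {a b : Multiset D} {m m' : ℕ}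

lemma zero : DerMulti i 0 N 0 0 := ⟨0, by simp⟩

lemma eq_zero_of_zero (h : DerMulti i Γ N 0 m) : Γ = 0 ∧ m = 0 := by
  obtain ⟨L, hL, -, rfl, rfl⟩ := h
  simp [Multiset.map_eq_zero.mp hL]

lemma singleton_iff {β : D} : DerMulti i Γ N {β} m ↔ Der i Γ N β m := by
  constructor
  · rintro ⟨L, hL, hder, rfl, rfl⟩
    obtain ⟨q, rfl, rfl⟩ := Multiset.map_eq_singleton.mp hL
    simpa using hder q (by simp)
  · exact fun h => ⟨{(Γ, β, m)}, by simpa using h⟩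

lemma add (h : DerMulti i Γ N a m) (h' : DerMulti i Γ' N b m') :
    DerMulti i (Γ + Γ') N (a + b) (m + m') := by
  obtain ⟨L, rfl, hder, rfl, rfl⟩ := h
  obtain ⟨L', rfl, hder', rfl, rfl⟩ := h'
  refine ⟨L + L', by simp, fun q hq => ?_, by simp, by simp⟩
  exact (Multiset.mem_add.mp hq).elim (hder q) (hder' q)

lemma exists_of_add (h : DerMulti i Γ N (a + b) m) :
    ∃ Γ₁ Γ₂ m₁ m₂, Γ = Γ₁ + Γ₂ ∧ m = m₁ + m₂ ∧ DerMulti i Γ₁ N a m₁ ∧ DerMulti i Γ₂ N b m₂ := by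
  obtain ⟨L, hL, hder, rfl, rfl⟩ := h
  obtain ⟨L₁, L₂, rfl, rfl, rfl⟩ := Multiset.exists_eq_add_of_map_eq_add hL
  exact ⟨_, _, _, _, by simp, by simp, ⟨L₁, rfl, fun q hq => hder q (by simp [hq]), rfl, rfl⟩,
    ⟨L₂, rfl, fun q hq => hder q (by simp [hq]), rfl, rfl⟩⟩

lemma var (k : Fin n) (a : Multiset D) : DerMulti i (Pi.single k a) (.var k) a 0 := by
  induction a using Multiset.induction with
  | empty => simpa using zero
  | cons β a ih =>
    simpa [← Multiset.singleton_add, Pi.single_add, single_eq_piSingle] using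
      (singleton_iff.mpr (Der.var k β)).add ih

lemma rename (h : DerMulti i Γ N a m) {n' : ℕ} (f : Fin n → Fin n') :
    DerMulti i (pushEnv f Γ) (N.rename f) a m := by
  obtain ⟨L, rfl, hder, rfl, rfl⟩ := h
  refine ⟨L.map fun q => (pushEnv f q.1, q.2), by simp, ?_, by simp [map_multiset_sum], by simp⟩
  exact Multiset.forall_mem_map_iff.mpr fun q hq => (hder q hq).rename f

lemma of_list {l : List ((Fin n → Multiset D) × D × ℕ)} (h : ∀ q ∈ l, Der i q.1 N q.2.1 q.2.2) :
    DerMulti i (l.map (·.1)).sum N ↑(l.map (·.2.1)) (l.map (·.2.2)).sum :=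
  ⟨l, by simp, h, by simp, by simp⟩

end DerMulti

theorem Der.app_of_derMulti {i : Multiset D × D → D} {n : ℕ} {Γ Δ : Fin n → Multiset D}
    {M N : Tm n} {a : Multiset D} {α : D} {m m' : ℕ} (hM : Der i Γ M (i (a, α)) m)
    (hN : DerMulti i Δ N a m') : Der i (Γ + Δ) (.app M N) α (m + m' + 1) := by
  obtain ⟨L, rfl, hder, rfl, rfl⟩ := hN
  obtain ⟨l, rfl⟩ := Quot.exists_rep L
  simpa using Der.app l (by simpa using hM) hder

def DerSubst (i : Multiset D × D → D) {n n' : ℕ} (Γs : Fin n → Fin n' → Multiset D)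
    (σ : Fin n → Tm n') (Δ : Fin n → Multiset D) (ms : Fin n → ℕ) : Prop :=
  ∀ k, DerMulti i (Γs k) (σ k) (Δ k) (ms k)

namespace DerSubst

variable {i : Multiset D × D → D} {n n' : ℕ} {Γs : Fin n → Fin n' → Multiset D}
  {σ : Fin n → Tm n'} {Δ : Fin n → Multiset D} {ms : Fin n → ℕ}

lemma exists_of_add {Δ₁ Δ₂ : Fin n → Multiset D} (h : DerSubst i Γs σ (Δ₁ + Δ₂) ms) :
    ∃ Γs₁ Γs₂ ms₁ ms₂, Γs = Γs₁ + Γs₂ ∧ ms = ms₁ + ms₂ ∧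
      DerSubst i Γs₁ σ Δ₁ ms₁ ∧ DerSubst i Γs₂ σ Δ₂ ms₂ := by
  choose Γs₁ Γs₂ ms₁ ms₂ hΓ hm h₁ h₂ using fun k => (h k).exists_of_add
  exact ⟨Γs₁, Γs₂, ms₁, ms₂, funext hΓ, funext hm, h₁, h₂⟩

lemma eq_zero_of_zero (h : DerSubst i Γs σ 0 ms) : Γs = 0 ∧ ms = 0 :=
  ⟨funext fun k => (h k).eq_zero_of_zero.1, funext fun k => (h k).eq_zero_of_zero.2⟩

lemma der_of_single {k : Fin n} {α : D} (h : DerSubst i Γs σ (single k α) ms) :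
    Der i (∑ j, Γs j) (σ k) α (∑ j, ms j) := by
  have hzero : ∀ j ≠ k, Γs j = 0 ∧ ms j = 0 := fun j hj =>
    DerMulti.eq_zero_of_zero (by simpa [single, hj] using h j)
  rw [sum_eq_single k (fun j _ hj => (hzero j hj).1) (by simp),
    sum_eq_single k (fun j _ hj => (hzero j hj).2) (by simp)]
  exact DerMulti.singleton_iff.mp (by simpa [single] using h k)

lemma lift (h : DerSubst i Γs σ Δ ms) (a : Multiset D) :
    DerSubst i (Fin.cons (Pi.single 0 a) fun j => Fin.cons 0 (Γs j))
      (fun k => Fin.cases (motive := fun _ => Tm (n' + 1)) (.var 0)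
        (fun j => (σ j).rename Fin.succ) k)
      (Fin.cons a Δ) (Fin.cons 0 ms) := by
  intro k
  cases k using Fin.cases with
  | zero => simpa using DerMulti.var 0 a
  | succ j => simpa [pushEnv_succ] using (h j).rename Fin.succ

lemma derMulti_subst {N : Tm n} {l : List ((Fin n → Multiset D) × D × ℕ)}
    (hN : ∀ q ∈ l, ∀ (Γs : Fin n → Fin n' → Multiset D) (ms : Fin n → ℕ),
      DerSubst i Γs σ q.1 ms → Der i (∑ k, Γs k) (N.subst σ) q.2.1 (q.2.2 + ∑ k, ms k))
    (h : DerSubst i Γs σ (l.map (·.1)).sum ms) :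
    DerMulti i (∑ k, Γs k) (N.subst σ) ↑(l.map (·.2.1)) ((l.map (·.2.2)).sum + ∑ k, ms k) := by
  induction l generalizing Γs ms with
  | nil =>
    obtain ⟨rfl, rfl⟩ := eq_zero_of_zero (by simpa using h)
    simpa using DerMulti.zero
  | cons q l ih =>
    obtain ⟨Γs₁, Γs₂, ms₁, ms₂, rfl, rfl, h₁, h₂⟩ := exists_of_add (by simpa using h)
    have hq := DerMulti.singleton_iff.mpr (hN q (by simp) Γs₁ ms₁ h₁)
    have hl := ih (fun q hq => hN q (by simp [hq])) h₂
    convert hq.add hl using 1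
    · simp [sum_add_distrib]
    · simp [Multiset.singleton_add]
    · simp only [List.map_cons, List.sum_cons, Pi.add_apply, sum_add_distrib]; ring

end DerSubst

theorem Der.subst {i : Multiset D × D → D} {n : ℕ} {Δ : Fin n → Multiset D} {M : Tm n} {α : D}
    {m : ℕ} (h : Der i Δ M α m) {n' : ℕ} {Γs : Fin n → Fin n' → Multiset D} {σ : Fin n → Tm n'}
    {ms : Fin n → ℕ} (hσ : DerSubst i Γs σ Δ ms) :
    Der i (∑ k, Γs k) (M.subst σ) α (m + ∑ k, ms k) := by
  induction h generalizing n' with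
  | var k α => simpa [Tm.subst] using hσ.der_of_single
  | @lam n Δ a M α m _ ih =>
    have hΓ : Pi.single 0 a + ∑ j, (Fin.cons 0 (Γs j) : Fin (n' + 1) → Multiset D)
        = Fin.cons a (∑ j, Γs j) := by
      funext k
      cases k using Fin.cases <;> simp [Finset.sum_apply]
    have := ih (hσ.lift a)
    rw [Fin.sum_univ_succ, Fin.sum_univ_succ] at this
    simp only [Fin.cons_zero, Fin.cons_succ, hΓ, zero_add] at this
    exact this.lam
  | app l hM _ ihM ihN =>
    obtain ⟨Γs₁, Γs₂, ms₁, ms₂, rfl, rfl, h₁, h₂⟩ := hσ.exists_of_add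
    have := (ihM h₁).app_of_derMulti (DerSubst.derMulti_subst (fun q hq _ _ => ihN q hq) h₂)
    rw [Tm.subst]
    convert this using 1
    · simp [sum_add_distrib]
    · simp only [Pi.add_apply, sum_add_distrib]; ring

end

theorem stmt_9_general {D : Type} (i : Multiset D × D → D) {n : ℕ} {Γ₀ : Fin n → Multiset D}
    {M : Tm (n + 1)} {N : Tm n} {α : D} {m₀ : ℕ}
    (l : List ((Fin n → Multiset D) × D × ℕ))
    (h₀ : Der i (Fin.cons (↑(l.map fun q => q.2.1) : Multiset D) Γ₀) M α m₀)
    (h : ∀ q ∈ l, Der i q.1 N q.2.1 q.2.2) :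
    Der i (Γ₀ + (l.map fun q => q.1).sum) (M.subst1 N) α
      (m₀ + (l.map fun q => q.2.2).sum) := by
  have hσ : DerSubst i (Fin.cons (l.map (·.1)).sum fun j => Pi.single j (Γ₀ j))
      (Fin.cases N Tm.var) (Fin.cons ↑(l.map (·.2.1)) Γ₀) (Fin.cons (l.map (·.2.2)).sum 0) := by
    intro k
    cases k using Fin.cases with
    | zero => simpa using DerMulti.of_list h
    | succ j => simpa using DerMulti.var j (Γ₀ j)
  simpa [Tm.subst1, Fin.sum_univ_succ, Finset.univ_sum_single, add_comm] using h₀.subst hσ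

/-- Weighted substitution lemma: from a derivation of `Γ₀, x : [β₁,…,β_k] ⊢ M : α`
with weight `m₀` and derivations `Γᵢ ⊢ N : βᵢ` with weights `mᵢ`, one obtains a
derivation of `Σᵢ Γᵢ ⊢ M{N/x} : α` whose number of application rules is exactly
the sum of those of the premises. -/
theorem stmt_9 {D : Type} [Infinite D] (i : Multiset D × D → D)
    (hi : Function.Injective i) {n : ℕ} {Γ₀ : Fin n → Multiset D}
    {M : Tm (n + 1)} {N : Tm n} {α : D} {m₀ : ℕ}
    (l : List ((Fin n → Multiset D) × D × ℕ))
    (h₀ : Der i (Fin.cons (↑(l.map fun q => q.2.1) : Multiset D) Γ₀) M α m₀)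
    (h : ∀ q ∈ l, Der i q.1 N q.2.1 q.2.2) :
    Der i (Γ₀ + (l.map fun q => q.1).sum) (M.subst1 N) α
      (m₀ + (l.map fun q => q.2.2).sum) :=
  stmt_9_general i l h₀ h
end

section
/- Typability of direct approximants: if a λ⊥-term M is in β-normal form and Γ ⊢_D M : α is derivable, then Γ ⊢_D ω(M) : α is derivable, where ω(M) is the direct approximant of M. -/
/-- The direct approximant `ω(M)` of a λ⊥-term. -/
def Da : ∀ {n : ℕ}, Tm n → Tm n
  | _, .var k => .var k
  | _, .bot => .bot
  | _, .lam M =>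
      match Da M with
      | .bot => .bot
      | M' => .lam M'
  | _, .app M N =>
      match Da M with
      | .bot => .bot
      | .lam _ => .bot
      | M' => .app M' (Da N)

theorem Der.ne_bot {D : Type} {i : Multiset D × D → D} {n : ℕ} {Γ : Fin n → Multiset D}
    {M : Tm n} {α : D} {m : ℕ} (h : Der i Γ M α m) : M ≠ .bot := by
  rintro rfl
  cases h

theorem Der.exists_app {D : Type} {i : Multiset D × D → D} {n : ℕ} {Γ : Fin n → Multiset D}
    {M N : Tm n} {α : D} {m : ℕ} {l : List ((Fin n → Multiset D) × D × ℕ)}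
    (hM : Der i Γ M (i (↑(l.map fun q => q.2.1), α)) m)
    (hN : ∀ q ∈ l, ∃ m', Der i q.1 N q.2.1 m') :
    ∃ m', Der i (Γ + (l.map fun q => q.1).sum) (.app M N) α m' := by
  choose c hc using hN
  let l' := l.attach.map fun q => (q.1.1, q.1.2.1, c q.1 q.2)
  have hfst : (l'.map fun q => q.1) = l.map fun q => q.1 := by
    simp [l', List.map_attach_eq_pmap, List.map_pmap, List.pmap_eq_map]
  have hsnd : (l'.map fun q => q.2.1) = l.map fun q => q.2.1 := by
    simp [l', List.map_attach_eq_pmap, List.map_pmap, List.pmap_eq_map]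
  have hl' : ∀ q ∈ l', Der i q.1 N q.2.1 q.2.2 := by
    simp only [l', List.mem_map, List.mem_attach, true_and, Subtype.exists]
    rintro _ ⟨q, hq, rfl⟩
    exact hc q hq
  rw [← hfst]
  exact ⟨_, .app l' (hsnd ▸ hM) hl'⟩

theorem Da_lam_of_ne_bot {n : ℕ} {M : Tm (n + 1)} (h : Da M ≠ .bot) :
    Da (.lam M) = .lam (Da M) := by
  rw [Da]
  split <;> simp_all

theorem Da_app_of_ne {n : ℕ} {M N : Tm n} (hbot : Da M ≠ .bot) (hlam : ∀ K, Da M ≠ .lam K) :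
    Da (.app M N) = .app (Da M) (Da N) := by
  rw [Da]
  split <;> simp_all

theorem Da_ne_lam {n : ℕ} {M : Tm n} (hM : ∀ K, M ≠ .lam K) (K : Tm (n + 1)) :
    Da M ≠ .lam K := by
  cases M with
  | lam M => exact absurd rfl (hM M)
  | app M N => rw [Da]; split <;> simp
  | var | bot => simp [Da]

theorem stmt_12_general {D : Type} (i : Multiset D × D → D)
    {n : ℕ} {Γ : Fin n → Multiset D} {M : Tm n}
    {α : D} {m : ℕ} (hnf : ∀ N, ¬ Beta M N) (h : Der i Γ M α m) :
    ∃ m' : ℕ, Der i Γ (Da M) α m' := by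
  induction h with
  | var k α => exact ⟨0, .var k α⟩
  | lam _ ih =>
    obtain ⟨m', hm'⟩ := ih fun N hN => hnf _ (.lam hN)
    rw [Da_lam_of_ne_bot hm'.ne_bot]
    exact ⟨m', .lam hm'⟩
  | @app n Γ M N α m l _ _ ihM ihN =>
    obtain ⟨m', hm'⟩ := ihM fun M' hM' => hnf _ (.appL hM')
    have hM_not_lam : ∀ K, M ≠ .lam K := by
      rintro K rfl
      exact hnf _ (.redex K N)
    rw [Da_app_of_ne hm'.ne_bot (Da_ne_lam hM_not_lam)]
    exact hm'.exists_app fun q hq => ihN q hq fun N' hN' => hnf _ (.appR hN')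

/-- Typability of direct approximants: if `M` is a β-normal λ⊥-term and `Γ ⊢ M : α` is
derivable in the type system of a relational graph model, then so is `Γ ⊢ ω(M) : α`. -/
theorem stmt_12 {D : Type} [Infinite D] (i : Multiset D × D → D)
    (hi : Function.Injective i) {n : ℕ} {Γ : Fin n → Multiset D} {M : Tm n}
    {α : D} {m : ℕ} (hnf : ∀ N, ¬ Beta M N) (h : Der i Γ M α m) :
    ∃ m' : ℕ, Der i Γ (Da M) α m' :=
  stmt_12_general i hnf h
end

section
/- Existence of typing for β-normalizable terms in the model E: if a λ-term M has a β-normal form, then there exist an environment Γ and a type α in the relational graph model E = (N, ∅)‾ (free completion of the partial pair with atoms ℕ and empty injection) such that Γ ⊢_E M : α, where the empty multiset ∅ does not occur positively in α and does not occur negatively in any type of Γ. -/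
/-- Pre-types of the relational graph model `E`, the free completion of the partial pair
`(ℕ, ∅)`: atoms `ξ_k` and arrows `a → α` with `a` a finite multiset of pre-types
(represented as a list). -/
inductive PreE : Type
  | atom : ℕ → PreE
  | node : List PreE → PreE → PreE

/-- Permutation congruence on pre-types: lists represent finite multisets. -/
inductive EqvE : PreE → PreE → Prop
  | refl (t) : EqvE t t
  | symm {s t} : EqvE s t → EqvE t s
  | trans {s t u} : EqvE s t → EqvE t u → EqvE s u
  | perm {l₁ l₂ t} : List.Perm l₁ l₂ → EqvE (.node l₁ t) (.node l₂ t)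
  | congHead {l t₁ t₂} : EqvE t₁ t₂ → EqvE (.node l t₁) (.node l t₂)
  | congArg {x y l t} : EqvE x y → EqvE (.node (x :: l) t) (.node (y :: l) t)

def ESetoid : Setoid PreE := ⟨EqvE, ⟨EqvE.refl, EqvE.symm, EqvE.trans⟩⟩

/-- The set of elements (types) of the model `E`. -/
def ETy : Type := Quotient ESetoid

/-- The (injective) arrow constructor `i : M_f(E) × E → E` of the model `E`. -/
noncomputable def arrE (p : Multiset ETy × ETy) : ETy :=
  Quotient.mk ESetoid (PreE.node (p.1.toList.map Quotient.out) p.2.out)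

/-- Polarized occurrences of the empty multiset in a pre-type: `Occ true` is a positive
occurrence, `Occ false` a negative one.  The empty multiset occurs negatively in
`∅ → β`; occurrences in the target of an arrow keep their polarity; occurrences in a
member of the source multiset of an arrow flip their polarity. -/
inductive Occ : Bool → PreE → Prop
  | negEmpty (t) : Occ false (.node [] t)
  | tail {p l t} : Occ p t → Occ p (.node l t)
  | arg {p β l t} : Occ (!p) β → β ∈ l → Occ p (.node l t)

/-- Polarized occurrences of the empty multiset in an element of `E`. -/
def OccQ (p : Bool) (x : ETy) : Prop := ∃ t : PreE, x = Quotient.mk ESetoid t ∧ Occ p t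

/-!
For an injective `i`, typability `∃ m, Γ ⊢ M : α` is invariant under β-conversion. This
rests on a substitution lemma that holds in both directions, `Δ ⊢ M[σ] : α` iff
`Γ ⊢ M : α` for some `Γ` that `σ` sends to `Δ`: typing is non-idempotent, so every type
that `Γ` gives to a variable is matched by its own derivation for the substituted term,
and the environments of these derivations add up to `Δ`. For a redex, injectivity of `i`
reads the multiset `a` off the type `a → α` of the abstraction.

It therefore suffices to type the normal form. A neutral `x N₁ ⋯ Nₖ` has every type `α`
without negative `∅`: type the normal arguments as `Δⱼ ⊢ Nⱼ : βⱼ` with no positive `∅`, and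
give `x` the type `[β₁] → ⋯ → [βₖ] → α`, whose sources are nonempty. An abstraction moves
environment types, free of negative `∅`, into the source of an arrow, where polarities flip.
-/
section MultisetSums

variable {D E F : Type*} [AddCommMonoid E] [AddCommMonoid F]

/-- With `T` a typing relation, `Multi T Δ a` is the multiset typing `Δ ⊢ N : a` of the
argument of an application. -/
inductive Multi (T : E → D → Prop) : E → Multiset D → Prop
  | zero : Multi T 0 0
  | cons {Δ₁ Δ₂ : E} {β : D} {a : Multiset D} :
      T Δ₁ β → Multi T Δ₂ a → Multi T (Δ₁ + Δ₂) (β ::ₘ a)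

namespace Multi

variable {T : E → D → Prop}

theorem zero_iff {Δ : E} : Multi T Δ 0 ↔ Δ = 0 := by
  refine ⟨fun h => ?_, fun h => h ▸ zero⟩
  generalize ha : (0 : Multiset D) = a at h
  cases h with
  | zero => rfl
  | cons _ _ => exact absurd ha.symm (Multiset.cons_ne_zero)

theorem cons_iff {Δ : E} {β : D} {a : Multiset D} :
    Multi T Δ (β ::ₘ a) ↔ ∃ Δ₁ Δ₂, Δ = Δ₁ + Δ₂ ∧ T Δ₁ β ∧ Multi T Δ₂ a := by
  refine ⟨fun h => ?_, fun ⟨Δ₁, Δ₂, hΔ, h₁, h₂⟩ => hΔ ▸ cons h₁ h₂⟩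
  generalize hb : β ::ₘ a = b at h
  induction h generalizing a with
  | zero => exact absurd hb Multiset.cons_ne_zero
  | @cons Δ₁ Δ₂ β' a' h₁ h₂ ih =>
    obtain ⟨rfl, rfl⟩ | ⟨hne, c, rfl, rfl⟩ := Multiset.cons_eq_cons.1 hb
    · exact ⟨Δ₁, Δ₂, rfl, h₁, h₂⟩
    · -- `β` sits in `a'`: extract it from the tail and put `β'` back in front
      obtain ⟨Δ₂₁, Δ₂₂, rfl, h₂₁, h₂₂⟩ := ih rfl
      exact ⟨Δ₂₁, Δ₁ + Δ₂₂, add_left_comm _ _ _, h₂₁, cons h₁ h₂₂⟩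

theorem add_iff {Δ : E} {a b : Multiset D} :
    Multi T Δ (a + b) ↔ ∃ Δ₁ Δ₂, Δ = Δ₁ + Δ₂ ∧ Multi T Δ₁ a ∧ Multi T Δ₂ b := by
  induction a using Multiset.induction generalizing Δ with
  | empty => simp [zero_iff]
  | cons β a ih =>
    simp only [Multiset.cons_add, cons_iff, ih]
    constructor
    · rintro ⟨Δ₁, _, rfl, h₁, Δ₂, Δ₃, rfl, h₂, h₃⟩
      exact ⟨Δ₁ + Δ₂, Δ₃, (add_assoc _ _ _).symm, ⟨Δ₁, Δ₂, rfl, h₁, h₂⟩, h₃⟩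
    · rintro ⟨_, Δ₃, rfl, ⟨Δ₁, Δ₂, rfl, h₁, h₂⟩, h₃⟩
      exact ⟨Δ₁, Δ₂ + Δ₃, add_assoc _ _ _, h₁, Δ₂, Δ₃, rfl, h₂, h₃⟩

theorem singleton_iff {Δ : E} {β : D} : Multi T Δ {β} ↔ T Δ β := by
  rw [← Multiset.cons_zero, cons_iff]
  simp [zero_iff]

theorem iff_eq_map (g : Multiset D →+ E) {Δ : E} {a : Multiset D} :
    Multi (fun Δ β => Δ = g {β}) Δ a ↔ Δ = g a := by
  induction a using Multiset.induction generalizing Δ with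
  | empty => simp [zero_iff]
  | cons β a ih =>
    rw [cons_iff, ← Multiset.singleton_add, map_add]
    simp only [ih]
    exact ⟨fun ⟨_, _, hΔ, h₁, h₂⟩ => h₁ ▸ h₂ ▸ hΔ, fun hΔ => ⟨_, _, hΔ, rfl, rfl⟩⟩

end Multi

structure IsAddRel (R : E → F → Prop) : Prop where
  zero_iff : ∀ y, R 0 y ↔ y = 0
  add_iff : ∀ x₁ x₂ y, R (x₁ + x₂) y ↔ ∃ y₁ y₂, y = y₁ + y₂ ∧ R x₁ y₁ ∧ R x₂ y₂

theorem AddMonoidHom.isAddRel_graph (g : E →+ F) : IsAddRel fun x y => y = g x where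
  zero_iff y := by rw [map_zero]
  add_iff x₁ x₂ y := by simp [map_add]

theorem Multi.isAddRel (T : F → D → Prop) : IsAddRel fun a Δ => Multi T Δ a where
  zero_iff _ := Multi.zero_iff
  add_iff _ _ _ := Multi.add_iff

theorem Multi.iff_of_isAddRel {T : E → D → Prop} {T' : F → D → Prop} {R : E → F → Prop}
    (hR : IsAddRel R) (hT : ∀ y β, T' y β ↔ ∃ x, R x y ∧ T x β) {y : F} {a : Multiset D} :
    Multi T' y a ↔ ∃ x, R x y ∧ Multi T x a := by
  constructor
  · intro h
    induction h with
    | zero => exact ⟨0, (hR.zero_iff 0).2 rfl, .zero⟩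
    | cons h₁ _ ih =>
      obtain ⟨x₁, hR₁, hT₁⟩ := (hT _ _).1 h₁
      obtain ⟨x₂, hR₂, hT₂⟩ := ih
      exact ⟨x₁ + x₂, (hR.add_iff _ _ _).2 ⟨_, _, rfl, hR₁, hR₂⟩, .cons hT₁ hT₂⟩
  · rintro ⟨x, hRx, h⟩
    induction h generalizing y with
    | zero => exact (hR.zero_iff y).1 hRx ▸ .zero
    | cons h₁ _ ih =>
      obtain ⟨y₁, y₂, rfl, hR₁, hR₂⟩ := (hR.add_iff _ _ _).1 hRx
      exact .cons ((hT _ _).2 ⟨_, hR₁, h₁⟩) (ih hR₂)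

end MultisetSums

section PiSums

variable {ι E F F' : Type*} [Fintype ι] [AddCommMonoid F] [AddCommMonoid F']

def PiSum (R : ι → E → F → Prop) (x : ι → E) (y : F) : Prop :=
  ∃ ys : ι → F, (∀ k, R k (x k) (ys k)) ∧ y = ∑ k, ys k

namespace PiSum

theorem isAddRel [AddCommMonoid E] {R : ι → E → F → Prop} (hR : ∀ k, IsAddRel (R k)) :
    IsAddRel (PiSum R) where
  zero_iff y := by
    constructor
    · rintro ⟨ys, hys, rfl⟩
      exact Finset.sum_eq_zero fun k _ => ((hR k).zero_iff _).1 (hys k)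
    · rintro rfl
      exact ⟨0, fun k => ((hR k).zero_iff _).2 rfl, by simp⟩
  add_iff x₁ x₂ y := by
    constructor
    · rintro ⟨ys, hys, rfl⟩
      choose ys₁ ys₂ hys hR₁ hR₂ using fun k => ((hR k).add_iff _ _ _).1 (hys k)
      exact ⟨∑ k, ys₁ k, ∑ k, ys₂ k, by simp [hys, Finset.sum_add_distrib],
        ⟨ys₁, hR₁, rfl⟩, ⟨ys₂, hR₂, rfl⟩⟩
    · rintro ⟨_, _, rfl, ⟨ys₁, hR₁, rfl⟩, ⟨ys₂, hR₂, rfl⟩⟩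
      exact ⟨ys₁ + ys₂, fun k => ((hR k).add_iff _ _ _).2 ⟨_, _, rfl, hR₁ k, hR₂ k⟩,
        by simp [Finset.sum_add_distrib]⟩

theorem single_iff [DecidableEq ι] [Zero E] {R : ι → E → F → Prop}
    (hR : ∀ k y, R k 0 y ↔ y = 0) {k : ι} {x : E} {y : F} :
    PiSum R (Pi.single k x) y ↔ R k x y := by
  constructor
  · rintro ⟨ys, hys, rfl⟩
    have hzero : ∀ j, j ≠ k → ys j = 0 := fun j hj =>
      (hR j _).1 (by simpa [Pi.single_apply, hj] using hys j)
    rw [Fintype.sum_eq_single k hzero]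
    simpa using hys k
  · intro h
    refine ⟨Pi.single k y, fun j => ?_, (Fintype.sum_pi_single' k y).symm⟩
    by_cases hj : j = k
    · subst hj; simpa using h
    · simpa [Pi.single_apply, hj] using (hR j 0).2 rfl

theorem eq_iff (g : ι → E → F) {x : ι → E} {y : F} :
    PiSum (fun k x y => y = g k x) x y ↔ y = ∑ k, g k (x k) := by
  refine ⟨fun ⟨ys, hys, hy⟩ => ?_, fun hy => ⟨_, fun k => rfl, hy⟩⟩
  simp only [hy, hys]

theorem exists_map_iff {R : ι → E → F → Prop} {R' : ι → E → F' → Prop}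
    (g : F →+ F') (hR : ∀ k x y', R' k x y' ↔ ∃ y, y' = g y ∧ R k x y) {x : ι → E} {y' : F'} :
    PiSum R' x y' ↔ ∃ y, y' = g y ∧ PiSum R x y := by
  constructor
  · rintro ⟨ys', hys', rfl⟩
    choose ys hys hR using fun k => (hR k _ _).1 (hys' k)
    exact ⟨∑ k, ys k, by simp [hys, map_sum], ys, hR, rfl⟩
  · rintro ⟨_, rfl, ys, hys, rfl⟩
    exact ⟨fun k => g (ys k), fun k => (hR k _ _).2 ⟨_, rfl, hys k⟩, map_sum g ys _⟩

theorem fin_succ_iff {n : ℕ} {R : Fin (n + 1) → E → F → Prop} {x : Fin (n + 1) → E} {y : F} :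
    PiSum R x y ↔
      ∃ y₀ y', y = y₀ + y' ∧ R 0 (x 0) y₀ ∧ PiSum (fun k => R k.succ) (Fin.tail x) y' := by
  simp only [PiSum, Fin.exists_fin_succ_pi, Fin.forall_fin_succ, Fin.sum_univ_succ,
    Fin.cons_zero, Fin.cons_succ, Fin.tail]
  constructor
  · rintro ⟨y₀, ys, ⟨h₀, hs⟩, rfl⟩
    exact ⟨y₀, _, rfl, h₀, ys, hs, rfl⟩
  · rintro ⟨y₀, _, rfl, h₀, ys, hs, rfl⟩
    exact ⟨y₀, ys, ⟨h₀, hs⟩, rfl⟩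

end PiSum

end PiSums

section Typing

abbrev Env (D : Type) (n : ℕ) := Fin n → Multiset D

variable {D : Type} (i : Multiset D × D → D) {n m : ℕ}

def Typable (Γ : Env D n) (M : Tm n) (α : D) : Prop := ∃ c, Der i Γ M α c

variable {i}

theorem single_eq_pi_single (k : Fin n) (α : D) : single k α = Pi.single k {α} := by
  ext j : 1
  simp [single, Pi.single_apply]

theorem typable_var_iff {Γ : Env D n} {k : Fin n} {α : D} :
    Typable i Γ (.var k) α ↔ Γ = Pi.single k {α} := by
  rw [← single_eq_pi_single]
  exact ⟨fun ⟨_, h⟩ => by cases h; rfl, fun h => ⟨0, h ▸ .var k α⟩⟩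

theorem typable_lam_iff {Γ : Env D n} {M : Tm (n + 1)} {δ : D} :
    Typable i Γ (.lam M) δ ↔ ∃ a α, δ = i (a, α) ∧ Typable i (Fin.cons a Γ) M α := by
  constructor
  · rintro ⟨_, h⟩
    cases h with
    | lam h => exact ⟨_, _, rfl, _, h⟩
  · rintro ⟨a, α, rfl, c, h⟩
    exact ⟨c, .lam h⟩

theorem multi_typable_iff_exists_list {Δ : Env D n} {N : Tm n} {a : Multiset D} :
    Multi (Typable i · N ·) Δ a ↔ ∃ l : List (Env D n × D × ℕ),
      (∀ q ∈ l, Der i q.1 N q.2.1 q.2.2) ∧ a = ↑(l.map fun q => q.2.1) ∧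
        Δ = (l.map fun q => q.1).sum := by
  constructor
  · intro h
    induction h with
    | zero => exact ⟨[], by simp, rfl, rfl⟩
    | @cons Δ₁ _ β _ h₁ _ ih =>
      obtain ⟨c, h₁⟩ := h₁
      obtain ⟨l, hl, rfl, rfl⟩ := ih
      exact ⟨(Δ₁, β, c) :: l, List.forall_mem_cons.2 ⟨h₁, hl⟩, rfl, by simp⟩
  · rintro ⟨l, hl, rfl, rfl⟩
    induction l with
    | nil => exact .zero
    | cons q l ih =>
      rw [List.forall_mem_cons] at hl
      simpa using Multi.cons ⟨_, hl.1⟩ (ih hl.2)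

theorem typable_app_iff {Γ : Env D n} {M N : Tm n} {α : D} :
    Typable i Γ (.app M N) α ↔ ∃ Γ₀ Δ a, Γ = Γ₀ + Δ ∧ Typable i Γ₀ M (i (a, α)) ∧
      Multi (Typable i · N ·) Δ a := by
  simp only [multi_typable_iff_exists_list]
  constructor
  · rintro ⟨_, h⟩
    cases h with
    | app l hM hN => exact ⟨_, _, _, rfl, ⟨_, hM⟩, l, hN, rfl, rfl⟩
  · rintro ⟨Γ₀, _, _, rfl, ⟨c, hM⟩, l, hN, rfl, rfl⟩
    exact ⟨_, .app l hM hN⟩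

theorem not_typable_bot {Γ : Env D n} {α : D} : ¬ Typable i Γ .bot α :=
  fun ⟨_, h⟩ => by cases h

theorem typable_app_iff_of_isAddRel {R : Env D n → Env D m → Prop} (hR : IsAddRel R)
    {M N : Tm n} {M' N' : Tm m}
    (hM : ∀ Δ α, Typable i Δ M' α ↔ ∃ Γ, R Γ Δ ∧ Typable i Γ M α)
    (hN : ∀ Δ α, Typable i Δ N' α ↔ ∃ Γ, R Γ Δ ∧ Typable i Γ N α) {Δ : Env D m} {α : D} :
    Typable i Δ (.app M' N') α ↔ ∃ Γ, R Γ Δ ∧ Typable i Γ (.app M N) α := by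
  simp only [typable_app_iff, hM, Multi.iff_of_isAddRel hR hN]
  constructor
  · rintro ⟨_, _, a, rfl, ⟨Γ₀, hR₀, hM₀⟩, ⟨Γ₁, hR₁, hN₁⟩⟩
    exact ⟨Γ₀ + Γ₁, (hR.add_iff _ _ _).2 ⟨_, _, rfl, hR₀, hR₁⟩, _, _, a, rfl, hM₀, hN₁⟩
  · rintro ⟨_, hR', Γ₀, Γ₁, a, rfl, hM₀, hN₁⟩
    obtain ⟨Δ₀, Δ₁, rfl, hR₀, hR₁⟩ := (hR.add_iff _ _ _).1 hR'
    exact ⟨Δ₀, Δ₁, a, rfl, ⟨Γ₀, hR₀, hM₀⟩, ⟨Γ₁, hR₁, hN₁⟩⟩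

end Typing

section Renaming

variable {D : Type} {i : Multiset D × D → D} {n m : ℕ}

def renameEnv (f : Fin n → Fin m) : Env D n →+ Env D m where
  toFun Γ := ∑ k, Pi.single (f k) (Γ k)
  map_zero' := by simp
  map_add' Γ Δ := by simp [Pi.single_add, Finset.sum_add_distrib]

theorem renameEnv_pi_single (f : Fin n → Fin m) (k : Fin n) (a : Multiset D) :
    renameEnv f (Pi.single k a) = Pi.single (f k) a := by
  simp only [renameEnv, AddMonoidHom.coe_mk, ZeroHom.coe_mk]
  rw [Fintype.sum_eq_single k fun j hj => by simp [hj]]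
  simp

theorem renameEnv_lift_cons (f : Fin n → Fin m) (a : Multiset D) (Γ : Env D n) :
    renameEnv (fun k => Fin.cases (motive := fun _ => Fin (m + 1)) 0 (fun j => (f j).succ) k)
      (Fin.cons a Γ) = Fin.cons a (renameEnv f Γ) := by
  ext j : 1
  cases j using Fin.cases <;>
    simp [renameEnv, Fin.sum_univ_succ, Pi.single_apply, Fin.succ_ne_zero]

theorem renameEnv_succ (Γ : Env D n) : renameEnv Fin.succ Γ = Fin.cons 0 Γ := by
  ext j : 1
  cases j using Fin.cases <;> simp [renameEnv, Pi.single_apply, Fin.succ_ne_zero]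

theorem typable_rename_iff {M : Tm n} {f : Fin n → Fin m} {Δ : Env D m} {α : D} :
    Typable i Δ (M.rename f) α ↔ ∃ Γ, Δ = renameEnv f Γ ∧ Typable i Γ M α := by
  induction M generalizing m α with
  | var k => simp [Tm.rename, typable_var_iff, renameEnv_pi_single]
  | lam M ih =>
    simp only [Tm.rename, typable_lam_iff, ih, Fin.exists_fin_succ_pi,
      renameEnv_lift_cons, Fin.cons_inj]
    constructor
    · rintro ⟨a, α, rfl, _, Γ, ⟨rfl, rfl⟩, h⟩
      exact ⟨Γ, rfl, a, α, rfl, h⟩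
    · rintro ⟨Γ, rfl, a, α, rfl, h⟩
      exact ⟨a, α, rfl, a, Γ, ⟨rfl, rfl⟩, h⟩
  | app M N ihM ihN =>
    exact typable_app_iff_of_isAddRel (renameEnv f).isAddRel_graph (fun _ _ => ihM)
      (fun _ _ => ihN)
  | bot => simp [Tm.rename, not_typable_bot]

end Renaming

section Substitution

variable {D : Type} {i : Multiset D × D → D} {n m m' : ℕ}

variable (i) in
def TypableSubst (σ : Fin n → Tm m) : Env D n → Env D m → Prop :=
  PiSum fun k a Δ => Multi (Typable i · (σ k) ·) Δ a

theorem isAddRel_typableSubst (σ : Fin n → Tm m) : IsAddRel (TypableSubst i σ) :=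
  PiSum.isAddRel fun _ => Multi.isAddRel _

theorem typableSubst_pi_single_iff {σ : Fin n → Tm m} {k : Fin n} {α : D} {Δ : Env D m} :
    TypableSubst i σ (Pi.single k {α}) Δ ↔ Typable i Δ (σ k) α :=
  (PiSum.single_iff fun _ _ => Multi.zero_iff).trans Multi.singleton_iff

theorem multi_typable_var_iff {k : Fin n} {Δ : Env D n} {a : Multiset D} :
    Multi (Typable i · (.var k) ·) Δ a ↔ Δ = Pi.single k a := by
  simpa [typable_var_iff] using Multi.iff_eq_map (AddMonoidHom.single (fun _ => Multiset D) k)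

theorem typableSubst_var_iff {Γ Δ : Env D n} : TypableSubst i Tm.var Γ Δ ↔ Δ = Γ := by
  simp only [TypableSubst, multi_typable_var_iff, PiSum.eq_iff, Finset.univ_sum_single]

theorem typableSubst_rename_iff {σ : Fin n → Tm m} {f : Fin m → Fin m'} {Γ : Env D n}
    {Δ' : Env D m'} :
    TypableSubst i (fun k => (σ k).rename f) Γ Δ' ↔
      ∃ Δ, Δ' = renameEnv f Δ ∧ TypableSubst i σ Γ Δ :=
  PiSum.exists_map_iff (renameEnv f) fun _ _ _ =>
    Multi.iff_of_isAddRel (renameEnv f).isAddRel_graph fun _ _ => typable_rename_iff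

theorem typableSubst_cons_iff {σ : Fin (n + 1) → Tm m} {a : Multiset D} {Γ : Env D n}
    {Δ : Env D m} :
    TypableSubst i σ (Fin.cons a Γ) Δ ↔ ∃ Δ₀ Δ', Δ = Δ₀ + Δ' ∧
      Multi (Typable i · (σ 0) ·) Δ₀ a ∧ TypableSubst i (fun k => σ k.succ) Γ Δ' := by
  simp only [TypableSubst, PiSum.fin_succ_iff, Fin.cons_zero, Fin.tail_cons]

theorem Fin.pi_single_zero_add_cons_zero {M : Type*} [AddMonoid M] (a : M) (x : Fin n → M) :
    (Pi.single 0 a + Fin.cons 0 x : Fin (n + 1) → M) = Fin.cons a x := by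
  ext j : 1
  cases j using Fin.cases <;> simp [Fin.succ_ne_zero]

theorem typableSubst_lift_iff {σ : Fin n → Tm m} {a : Multiset D} {Γ : Env D n}
    {Δ' : Env D (m + 1)} :
    TypableSubst i (fun k => Fin.cases (motive := fun _ => Tm (m + 1)) (.var 0)
        (fun j => (σ j).rename Fin.succ) k) (Fin.cons a Γ) Δ' ↔
      ∃ Δ, Δ' = Fin.cons a Δ ∧ TypableSubst i σ Γ Δ := by
  simp only [typableSubst_cons_iff, Fin.cases_zero, Fin.cases_succ, multi_typable_var_iff,
    typableSubst_rename_iff, renameEnv_succ]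
  constructor
  · rintro ⟨_, _, rfl, rfl, Δ, rfl, h⟩
    exact ⟨Δ, Fin.pi_single_zero_add_cons_zero a Δ, h⟩
  · rintro ⟨Δ, rfl, h⟩
    exact ⟨_, _, (Fin.pi_single_zero_add_cons_zero a Δ).symm, rfl, Δ, rfl, h⟩

theorem typable_subst_iff {M : Tm n} {σ : Fin n → Tm m} {Δ : Env D m} {α : D} :
    Typable i Δ (M.subst σ) α ↔ ∃ Γ, TypableSubst i σ Γ Δ ∧ Typable i Γ M α := by
  induction M generalizing m α with
  | var k => simp [Tm.subst, typable_var_iff, typableSubst_pi_single_iff]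
  | lam M ih =>
    simp only [Tm.subst, typable_lam_iff, ih, Fin.exists_fin_succ_pi, typableSubst_lift_iff,
      Fin.cons_inj]
    constructor
    · rintro ⟨a, α, rfl, _, Γ, ⟨Δ, ⟨rfl, rfl⟩, hσ⟩, h⟩
      exact ⟨Γ, hσ, a, α, rfl, h⟩
    · rintro ⟨Γ, hσ, a, α, rfl, h⟩
      exact ⟨a, α, rfl, a, Γ, ⟨Δ, ⟨rfl, rfl⟩, hσ⟩, h⟩
  | app M N ihM ihN =>
    exact typable_app_iff_of_isAddRel (isAddRel_typableSubst σ) (fun _ _ => ihM)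
      (fun _ _ => ihN)
  | bot => simp [Tm.subst, not_typable_bot]

theorem typable_subst1_iff {M : Tm (n + 1)} {N : Tm n} {Δ : Env D n} {α : D} :
    Typable i Δ (M.subst1 N) α ↔ ∃ Γ₀ Δ₁ a, Δ = Γ₀ + Δ₁ ∧ Typable i (Fin.cons a Γ₀) M α ∧
      Multi (Typable i · N ·) Δ₁ a := by
  simp only [Tm.subst1, typable_subst_iff, Fin.exists_fin_succ_pi, typableSubst_cons_iff,
    Fin.cases_zero, Fin.cases_succ, typableSubst_var_iff]
  constructor
  · rintro ⟨a, Γ₀, ⟨Δ₁, _, rfl, hN, hΓ₀⟩, hM⟩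
    exact ⟨Γ₀, Δ₁, a, by rw [hΓ₀, add_comm], hM, hN⟩
  · rintro ⟨Γ₀, Δ₁, a, rfl, hM, hN⟩
    exact ⟨a, Γ₀, ⟨Δ₁, Γ₀, add_comm _ _, hN, rfl⟩, hM⟩

end Substitution

section BetaConversion

variable {D : Type} {i : Multiset D × D → D} {n : ℕ}

theorem typable_redex_iff (hi : Function.Injective i) {M : Tm (n + 1)} {N : Tm n}
    {Γ : Env D n} {α : D} :
    Typable i Γ (.app (.lam M) N) α ↔ Typable i Γ (M.subst1 N) α := by
  simp only [typable_app_iff, typable_lam_iff, typable_subst1_iff]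
  constructor
  · rintro ⟨Γ₀, Δ₁, a, rfl, ⟨a', α', hi', hM⟩, hN⟩
    obtain ⟨rfl, rfl⟩ := Prod.ext_iff.1 (hi hi')
    exact ⟨Γ₀, Δ₁, a, rfl, hM, hN⟩
  · rintro ⟨Γ₀, Δ₁, a, rfl, hM, hN⟩
    exact ⟨Γ₀, Δ₁, a, rfl, ⟨a, α, rfl, hM⟩, hN⟩

theorem Beta.typable_iff (hi : Function.Injective i) {M M' : Tm n} (h : Beta M M')
    {Γ : Env D n} {α : D} : Typable i Γ M α ↔ Typable i Γ M' α := by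
  induction h generalizing α with
  | redex M N => exact typable_redex_iff hi
  | appL _ ih => simp only [typable_app_iff, ih]
  | appR _ ih => simp only [typable_app_iff, ih]
  | lam _ ih => simp only [typable_lam_iff, ih]

theorem typable_iff_of_eqvGen (hi : Function.Injective i) {M N : Tm n}
    (h : Relation.EqvGen Beta M N) {Γ : Env D n} {α : D} :
    Typable i Γ M α ↔ Typable i Γ N α := by
  induction h with
  | rel _ _ h => exact h.typable_iff hi
  | refl => rfl
  | symm _ _ _ ih => exact ih.symm
  | trans _ _ _ _ _ ih₁ ih₂ => exact ih₁.trans ih₂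

end BetaConversion

section ModelE

-- `ETy` is not reducible, so `Quotient.mk ESetoid t` and `Quotient.out x` live in
-- `Quotient ESetoid` and defeat rewriting in terms of type `ETy`; these wrappers fix the type.
def ETy.mk (t : PreE) : ETy := Quotient.mk ESetoid t

noncomputable def ETy.out (x : ETy) : PreE := Quotient.out x

theorem ETy.mk_out (x : ETy) : ETy.mk x.out = x := Quotient.out_eq x

theorem arrE_eq_mk (p : Multiset ETy × ETy) :
    arrE p = ETy.mk (.node (p.1.toList.map ETy.out) p.2.out) := rfl

def PreE.dest : PreE → ℕ ⊕ (Multiset ETy × ETy)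
  | .atom k => .inl k
  | .node l t => .inr (↑(l.map ETy.mk), ETy.mk t)

theorem EqvE.dest_eq {s t : PreE} (h : EqvE s t) : s.dest = t.dest := by
  induction h with
  | refl => rfl
  | symm _ ih => exact ih.symm
  | trans _ _ ih₁ ih₂ => exact ih₁.trans ih₂
  | perm hp => simp only [PreE.dest, Multiset.coe_eq_coe.2 (hp.map ETy.mk)]
  | congHead h =>
    have : ETy.mk _ = ETy.mk _ := Quotient.sound h
    simp only [PreE.dest, this]
  | congArg h =>
    have : ETy.mk _ = ETy.mk _ := Quotient.sound h
    simp only [PreE.dest, List.map_cons, this]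

def ETy.dest : ETy → ℕ ⊕ (Multiset ETy × ETy) :=
  Quotient.lift PreE.dest fun _ _ => EqvE.dest_eq

theorem ETy.dest_arrE (p : Multiset ETy × ETy) : (arrE p).dest = .inr p := by
  change PreE.dest (.node (p.1.toList.map ETy.out) p.2.out) = _
  simp only [PreE.dest, List.map_map, Function.comp_def, ETy.mk_out, List.map_id',
    Multiset.coe_toList]

theorem arrE_injective : Function.Injective arrE := fun p q h =>
  Sum.inr_injective (by rw [← ETy.dest_arrE, ← ETy.dest_arrE, h])

theorem occ_node_iff {p : Bool} {l : List PreE} {t : PreE} :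
    Occ p (.node l t) ↔ (p = false ∧ l = []) ∨ Occ p t ∨ ∃ β ∈ l, Occ (!p) β := by
  constructor
  · rintro (_ | h | ⟨h, hβ⟩)
    · exact .inl ⟨rfl, rfl⟩
    · exact .inr (.inl h)
    · exact .inr (.inr ⟨_, hβ, h⟩)
  · rintro (⟨rfl, rfl⟩ | h | ⟨β, hβ, h⟩)
    · exact .negEmpty t
    · exact .tail h
    · exact .arg h hβ

theorem EqvE.occ_iff {s t : PreE} (h : EqvE s t) (p : Bool) : Occ p s ↔ Occ p t := by
  induction h generalizing p with
  | refl => rfl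
  | symm _ ih => exact (ih p).symm
  | trans _ _ ih₁ ih₂ => exact (ih₁ p).trans (ih₂ p)
  | perm hp =>
    simp only [occ_node_iff, ← List.length_eq_zero_iff, hp.length_eq, hp.mem_iff]
  | congHead _ ih => simp only [occ_node_iff, ih]
  | congArg _ ih => simp [occ_node_iff, ih]

theorem occQ_mk_iff {p : Bool} {t : PreE} : OccQ p (ETy.mk t) ↔ Occ p t :=
  ⟨fun ⟨_, hs, h⟩ => ((Quotient.exact hs).occ_iff p).2 h, fun h => ⟨t, rfl, h⟩⟩

theorem not_occQ_atom {p : Bool} {k : ℕ} : ¬ OccQ p (ETy.mk (.atom k)) := by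
  rw [occQ_mk_iff]
  rintro ⟨⟩

theorem occQ_arrE_iff {p : Bool} {a : Multiset ETy} {α : ETy} :
    OccQ p (arrE (a, α)) ↔ (p = false ∧ a = 0) ∨ OccQ p α ∨ ∃ β ∈ a, OccQ (!p) β := by
  have hout : ∀ {q} (x : ETy), OccQ q x ↔ Occ q x.out := fun x => by
    rw [← occQ_mk_iff, ETy.mk_out]
  rw [arrE_eq_mk, occQ_mk_iff, occ_node_iff, hout]
  constructor
  · rintro (⟨hp, hl⟩ | h | ⟨_, hmem, h⟩)
    · exact .inl ⟨hp, Multiset.toList_eq_nil.1 (List.map_eq_nil_iff.1 hl)⟩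
    · exact .inr (.inl h)
    · obtain ⟨β, hβ, rfl⟩ := List.mem_map.1 hmem
      exact .inr (.inr ⟨β, Multiset.mem_toList.1 hβ, (hout β).2 h⟩)
  · rintro (⟨hp, rfl⟩ | h | ⟨β, hβ, h⟩)
    · exact .inl ⟨hp, by rw [Multiset.toList_zero, List.map_nil]⟩
    · exact .inr (.inl h)
    · exact .inr (.inr ⟨_, List.mem_map.2 ⟨β, Multiset.mem_toList.2 hβ, rfl⟩, (hout β).1 h⟩)

end ModelE

section NormalForms

/-- `NF true M`: `M` is a neutral normal form `x N₁ ⋯ Nₖ`; `NF false M`: `M` is a normal form. -/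
inductive NF : Bool → ∀ {n : ℕ}, Tm n → Prop
  | var {n} (k : Fin n) : NF true (.var k)
  | app {n} {M N : Tm n} : NF true M → NF false N → NF true (.app M N)
  | ofNeutral {n} {M : Tm n} : NF true M → NF false M
  | lam {n} {M : Tm (n + 1)} : NF false M → NF false (.lam M)

variable {n : ℕ}

theorem nf_of_forall_not_beta {M : Tm n} (hM : BotFree M) (h : ∀ P, ¬ Beta M P) :
    NF false M := by
  induction M with
  | var k => exact .ofNeutral (.var k)
  | lam M ih => exact .lam (ih hM fun P hP => h _ (.lam hP))
  | app P Q ihP ihQ =>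
    have hP := ihP hM.1 fun P' hP' => h _ (.appL hP')
    have hQ := ihQ hM.2 fun Q' hQ' => h _ (.appR hQ')
    cases hP with
    | ofNeutral hP => exact .ofNeutral (.app hP hQ)
    | lam => exact absurd (.redex _ Q) (h _)
  | bot => exact absurd hM id

def EnvNegFree (Γ : Fin n → Multiset ETy) : Prop :=
  ∀ k, ∀ β ∈ Γ k, ¬ OccQ false β

theorem EnvNegFree.pi_single {k : Fin n} {α : ETy} (hα : ¬ OccQ false α) :
    EnvNegFree (Pi.single k {α}) := by
  intro j β hβ
  by_cases hj : j = k
  · subst hj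
    rw [Pi.single_eq_same, Multiset.mem_singleton] at hβ
    rwa [hβ]
  · simp [hj] at hβ

theorem EnvNegFree.add {Γ Δ : Fin n → Multiset ETy} (hΓ : EnvNegFree Γ)
    (hΔ : EnvNegFree Δ) : EnvNegFree (Γ + Δ) := fun k β hβ =>
  (Multiset.mem_add.1 hβ).elim (hΓ k β) (hΔ k β)

def PosFreeTypable (M : Tm n) : Prop :=
  ∃ Γ α, Typable arrE Γ M α ∧ ¬ OccQ true α ∧ EnvNegFree Γ

def NegFreeTypable (M : Tm n) : Prop :=
  ∀ α, ¬ OccQ false α → ∃ Γ, Typable arrE Γ M α ∧ EnvNegFree Γ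

theorem NegFreeTypable.posFreeTypable {M : Tm n} (h : NegFreeTypable M) : PosFreeTypable M :=
  let ⟨Γ, hM, hΓ⟩ := h _ (not_occQ_atom (k := 0))
  ⟨Γ, _, hM, not_occQ_atom, hΓ⟩

theorem negFreeTypable_var (k : Fin n) : NegFreeTypable (.var k) :=
  fun _ hα => ⟨_, typable_var_iff.2 rfl, .pi_single hα⟩

theorem NegFreeTypable.app {M N : Tm n} (hM : NegFreeTypable M) (hN : PosFreeTypable N) :
    NegFreeTypable (.app M N) := by
  intro α hα
  obtain ⟨Δ, β, hN, hβ, hΔ⟩ := hN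
  obtain ⟨Γ, hM, hΓ⟩ := hM (arrE ({β}, α)) (by simp [occQ_arrE_iff, hα, hβ])
  exact ⟨Γ + Δ, typable_app_iff.2 ⟨Γ, Δ, _, rfl, hM, Multi.singleton_iff.2 hN⟩, hΓ.add hΔ⟩

theorem PosFreeTypable.lam {M : Tm (n + 1)} (h : PosFreeTypable M) : PosFreeTypable (.lam M) := by
  obtain ⟨Γ', α, hM, hα, hΓ'⟩ := h
  rw [← Fin.cons_self_tail Γ'] at hM hΓ'
  refine ⟨Fin.tail Γ', arrE (Γ' 0, α), typable_lam_iff.2 ⟨_, _, rfl, hM⟩, ?_,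
    fun k => hΓ' k.succ⟩
  simpa [occQ_arrE_iff, hα] using hΓ' 0

theorem NF.posFreeTypable {b : Bool} {M : Tm n} (h : NF b M) :
    PosFreeTypable M ∧ (b = true → NegFreeTypable M) := by
  induction h with
  | var k => exact ⟨(negFreeTypable_var k).posFreeTypable, fun _ => negFreeTypable_var k⟩
  | app _ _ ihM ihN =>
    have h := (ihM.2 rfl).app ihN.1
    exact ⟨h.posFreeTypable, fun _ => h⟩
  | ofNeutral _ ih => exact ⟨ih.1, nofun⟩
  | lam _ ih => exact ⟨ih.1.lam, nofun⟩

end NormalForms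

theorem stmt_15_general {n : ℕ} (M : Tm n)
    (hnorm : ∃ N : Tm n, BotFree N ∧
      Relation.EqvGen (fun a b : Tm n => Beta a b) M N ∧ ∀ P, ¬ Beta N P) :
    ∃ (Γ : Fin n → Multiset ETy) (α : ETy) (m : ℕ),
      Der arrE Γ M α m ∧ ¬ OccQ true α ∧
        ∀ (k : Fin n), ∀ β ∈ Γ k, ¬ OccQ false β := by
  obtain ⟨N, hN, hMN, hnf⟩ := hnorm
  obtain ⟨Γ, α, hNα, hα, hΓ⟩ := (nf_of_forall_not_beta hN hnf).posFreeTypable.1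
  obtain ⟨m, hM⟩ := (typable_iff_of_eqvGen arrE_injective hMN).2 hNα
  exact ⟨Γ, α, m, hM, hα, hΓ⟩

/-- If a λ-term is β-normalizable then it is typable in `E` with a type in which the
empty multiset does not occur positively and an environment in whose types the empty
multiset does not occur negatively. -/
theorem stmt_15 {n : ℕ} (M : Tm n) (hM : BotFree M)
    (hnorm : ∃ N : Tm n, BotFree N ∧
      Relation.EqvGen (fun a b : Tm n => Beta a b) M N ∧ ∀ P, ¬ Beta N P) :
    ∃ (Γ : Fin n → Multiset ETy) (α : ETy) (m : ℕ),
      Der arrE Γ M α m ∧ ¬ OccQ true α ∧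
        ∀ (k : Fin n), ∀ β ∈ Γ k, ¬ OccQ false β :=
  stmt_15_general M hnorm
end
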